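/- Let p be a real number that is not a nonnegative integer, and define the polynomials G_n(p) ∈ ℝ[t] by G_0(p) = 1 and G_n(p) = (p/n) Σ_{k=1}^{n} (−1)^{k+1} B_k · G_{n−k}(p) for n ≥ 1, where B_k ∈ ℝ[t] is the k-th Bernoulli polynomial. Then for every n ≥ 0, the polynomial G_n(p) has degree exactly n in t. -/

import Mathlib

open Finset Polynomial

/-- The `k`-th Bernoulli polynomial as a real polynomial
(generating function `u e^{tu}/(e^u - 1)`, so `bernR 1 = X - 1/2`). -/
noncomputable def bernR (k : ℕ) : Polynomial ℝ :=
  (Polynomial.bernoulli k).map (algebraMap ℚ ℝ)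

/-!
Each `B_k` is monic of degree `k`, so by induction `deg G_n ≤ n`, and the coefficients `c_n` of
`t^n` satisfy the scalar recursion `c_n = (p/n) ∑_{k=1}^n (-1)^(k+1) c_(n-k)`, `c_0 = 1`.
Alternating partial sums of binomial coefficients telescope by Pascal's rule,
`∑_{j ≤ m} (-1)^(m-j) C(p, j) = C(p-1, m)`, and absorption `(m+1) C(p, m+1) = p C(p-1, m)`
shows that `c_n = C(p, n) = p(p-1)⋯(p-n+1)/n!`, which is nonzero when `p ∉ ℕ`.
-/

namespace Ring

variable {R : Type*} [Ring R] [BinomialRing R]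

theorem sum_range_neg_one_pow_mul_choose (r : R) (n : ℕ) :
    ∑ k ∈ range (n + 1), (-1) ^ k * choose r (n - k) = choose (r - 1) n := by
  induction n with
  | zero => simp
  | succ n ih =>
    have pascal := choose_succ_succ (r - 1) n
    rw [sub_add_cancel] at pascal
    rw [sum_range_succ', pow_zero, one_mul, Nat.sub_zero, pascal]
    simp only [pow_succ, mul_neg_one, neg_mul, sum_neg_distrib, Nat.add_sub_add_right, ih]
    abel

theorem succ_mul_choose_succ (r : R) (n : ℕ) :
    (n + 1 : R) * choose r (n + 1) = r * choose (r - 1) n := by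
  simpa [choose_one_right, nsmul_eq_mul] using choose_smul_choose r (Nat.le_add_left 1 n)

theorem choose_ne_zero_of_forall_ne_natCast [NoZeroDivisors R] {r : R}
    (hr : ∀ m : ℕ, r ≠ m) (n : ℕ) : choose r n ≠ 0 := by
  induction n generalizing r with
  | zero =>
    have : Nontrivial R := nontrivial_of_ne r 0 (by simpa using hr 0)
    simp
  | succ n ih =>
    have hr' : ∀ m : ℕ, r - 1 ≠ m := fun m h => hr (m + 1) (by push_cast; rw [← h]; abel)
    have hprod : r * choose (r - 1) n ≠ 0 :=
      mul_ne_zero (by simpa using hr 0) (ih hr')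
    rw [← succ_mul_choose_succ] at hprod
    exact right_ne_zero_of_mul hprod

theorem choose_succ_eq_mul_sum {K : Type*} [Field K] [CharZero K] (r : K) (n : ℕ) :
    choose r (n + 1) =
      r / (n + 1 : ℕ) * ∑ k ∈ Icc 1 (n + 1), (-1) ^ (k + 1) * choose r (n + 1 - k) := by
  have reindex : ∑ k ∈ Icc 1 (n + 1), (-1 : K) ^ (k + 1) * choose r (n + 1 - k)
      = ∑ k ∈ range (n + 1), (-1) ^ k * choose r (n - k) := by
    rw [← Ico_add_one_right_eq_Icc, sum_Ico_eq_sum_range, Nat.add_sub_cancel]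
    refine sum_congr rfl fun k _ => ?_
    rw [show 1 + k + 1 = k + 2 by omega, pow_add, neg_one_sq, mul_one,
      show n + 1 - (1 + k) = n - k by omega]
  have hn : (n + 1 : K) ≠ 0 := Nat.cast_add_one_ne_zero n
  rw [reindex, sum_range_neg_one_pow_mul_choose, Nat.cast_succ, div_mul_eq_mul_div,
    eq_div_iff hn, mul_comm, succ_mul_choose_succ]

end Ring

namespace Polynomial

theorem natDegree_bernoulli (n : ℕ) : (bernoulli n).natDegree = n := by
  refine natDegree_eq_of_le_of_coeff_ne_zero ?_ (by simp [coeff_bernoulli])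
  exact natDegree_le_iff_coeff_eq_zero.2 fun i hi => by simp [coeff_bernoulli, not_le.2 hi]

theorem monic_bernoulli (n : ℕ) : (bernoulli n).Monic := by
  simp [Monic, leadingCoeff, natDegree_bernoulli, coeff_bernoulli]

section
variable {R : Type*} [Semiring R] {s : Finset ℕ} {n : ℕ} {P Q : ℕ → R[X]}

theorem natDegree_sum_mul_le (hs : ∀ k ∈ s, k ≤ n) (hP : ∀ k ∈ s, (P k).natDegree ≤ k)
    (hQ : ∀ k ∈ s, (Q k).natDegree ≤ n - k) : (∑ k ∈ s, P k * Q k).natDegree ≤ n :=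
  natDegree_sum_le_of_forall_le _ _ fun k hk =>
    (natDegree_mul_le_of_le (hP k hk) (hQ k hk)).trans (Nat.add_sub_of_le (hs k hk)).le

theorem coeff_sum_mul_of_natDegree_le (hs : ∀ k ∈ s, k ≤ n)
    (hP : ∀ k ∈ s, (P k).natDegree ≤ k) (hQ : ∀ k ∈ s, (Q k).natDegree ≤ n - k) :
    (∑ k ∈ s, P k * Q k).coeff n = ∑ k ∈ s, (P k).coeff k * (Q k).coeff (n - k) := by
  rw [finsetSum_coeff]
  refine sum_congr rfl fun k hk => ?_
  rw [← coeff_mul_add_eq_of_natDegree_le (hP k hk) (hQ k hk), Nat.add_sub_of_le (hs k hk)]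

end

end Polynomial

theorem natDegree_le_and_coeff_eq_choose {K : Type*} [Field K] [CharZero K] {p : K}
    {B G : ℕ → K[X]} (hBm : ∀ k, (B k).Monic) (hBd : ∀ k, (B k).natDegree = k) (hG0 : G 0 = 1)
    (hG : ∀ n : ℕ, 1 ≤ n →
      G n = C (p / (n : K)) * ∑ k ∈ Icc 1 n, (-1 : K[X]) ^ (k + 1) * B k * G (n - k))
    (n : ℕ) : (G n).natDegree ≤ n ∧ (G n).coeff n = Ring.choose p n := by
  induction n using Nat.strong_induction_on with
  | _ n ih =>
  rcases n with _ | m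
  · simp [hG0]
  have hs : ∀ k ∈ Icc 1 (m + 1), k ≤ m + 1 := fun k hk => (mem_Icc.1 hk).2
  have hsign : ∀ k, (-1 : K[X]) ^ (k + 1) * B k = C ((-1) ^ (k + 1)) * B k := by simp
  have hP : ∀ k ∈ Icc 1 (m + 1), ((-1 : K[X]) ^ (k + 1) * B k).natDegree ≤ k := fun k _ => by
    rw [hsign]; exact (natDegree_C_mul_le _ _).trans (hBd k).le
  have hlt : ∀ k ∈ Icc 1 (m + 1), m + 1 - k < m + 1 := fun k hk => by
    have := (mem_Icc.1 hk).1; omega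
  have hQ : ∀ k ∈ Icc 1 (m + 1), (G (m + 1 - k)).natDegree ≤ m + 1 - k := fun k hk =>
    (ih _ (hlt k hk)).1
  rw [hG (m + 1) m.succ_pos]
  refine ⟨(natDegree_C_mul_le _ _).trans (natDegree_sum_mul_le hs hP hQ), ?_⟩
  rw [coeff_C_mul, coeff_sum_mul_of_natDegree_le hs hP hQ, Ring.choose_succ_eq_mul_sum]
  refine congrArg _ (sum_congr rfl fun k hk => ?_)
  have hBk : (B k).coeff k = 1 := by simpa [hBd k] using (hBm k).coeff_natDegree
  rw [hsign, coeff_C_mul, hBk, mul_one, (ih _ (hlt k hk)).2]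

/-- if `p` is not a nonnegative integer, then the polynomial
`Gₙ(p) ∈ ℝ[t]` has degree exactly `n`. -/
theorem G_degree_of_not_nat
    (p : ℝ) (hp : ∀ m : ℕ, p ≠ (m : ℝ))
    (G : ℕ → Polynomial ℝ) (hG0 : G 0 = 1)
    (hG : ∀ n : ℕ, 1 ≤ n →
      G n = Polynomial.C (p / (n : ℝ)) *
        ∑ k ∈ Finset.Icc 1 n, (-1 : Polynomial ℝ) ^ (k + 1) * bernR k * G (n - k)) :
    ∀ n : ℕ, (G n).degree = n := by
  intro n
  have hBm : ∀ k, (bernR k).Monic := fun k => (monic_bernoulli k).map _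
  have hBd : ∀ k, (bernR k).natDegree = k := fun k => by
    rw [bernR, natDegree_map, natDegree_bernoulli]
  obtain ⟨hdeg, hcoeff⟩ := natDegree_le_and_coeff_eq_choose hBm hBd hG0 hG n
  refine degree_eq_of_le_of_coeff_ne_zero (degree_le_of_natDegree_le hdeg) ?_
  rw [hcoeff]
  exact Ring.choose_ne_zero_of_forall_ne_natCast hp n
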